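/- arXiv:2605.10591 — 2 statements merged into one kernel-verified Lean document; each statement's English description precedes it below -/
import Mathlib

section
/- Let p1 and p2 be two distinct solution denominators, and assume there is no ζ ∈ 𝕜 with ζ^{n3−n2} = 1 and p2 = ζ·p1. Then p1^{n3−n2} − p2^{n3−n2} ≠ 0, and the following two identities hold in 𝕜[t]: (n3−1)·A2·(p1^{n3−n2} − p2^{n3−n2}) = −[(p1^{n3−1} − p2^{n3−1})′ + (n3−1)·A1·(p1^{n3−n1} − p2^{n3−n1})], and (n2−1)·A3·(p1^{n3−n2} − p2^{n3−n2}) = p1^{n3−n2}·p2^{n3−n2}·(p1^{n2−1} − p2^{n2−1})′ + (n2−1)·A1·p1^{n3−n2}·p2^{n3−n2}·(p1^{n2−n1} − p2^{n2−n1}). In particular, A2 and A3 are uniquely determined by p1, p2 and A1. -/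
open Polynomial

/-- Index set `{3, 2, 1, ∂}` for the terms of the generalized Abel equation. -/
inductive AbelIdx : Type
  | I1 : AbelIdx
  | I2 : AbelIdx
  | I3 : AbelIdx
  | D  : AbelIdx
  deriving DecidableEq

instance : Fintype AbelIdx :=
  ⟨{.I1, .I2, .I3, .D}, fun x => by cases x <;> simp⟩

/-- `p` is a solution denominator: `p ≠ 0` and
`p^(n3-2)·p' + A3 + A2·p^(n3-n2) + A1·p^(n3-n1) = 0`, i.e. `x = 1/p` solves the
generalized Abel equation `x' = A3 x^{n3} + A2 x^{n2} + A1 x^{n1}`. -/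
def IsSolDen {𝕜 : Type*} [Field 𝕜] (n1 n2 n3 : ℕ) (A1 A2 A3 : Polynomial 𝕜)
    (p : Polynomial 𝕜) : Prop :=
  p ≠ 0 ∧
    p ^ (n3 - 2) * Polynomial.derivative p + A3 + A2 * p ^ (n3 - n2) + A1 * p ^ (n3 - n1) = 0

/-- `Φ_ℓ(r)` for `ℓ ∈ {1,2,3,∂}`. -/
def Phi (n1 n2 n3 a1 a2 a3 r : ℕ) : AbelIdx → ℤ
  | .I1 => (n1 : ℤ) * r - a1
  | .I2 => (n2 : ℤ) * r - a2
  | .I3 => (n3 : ℤ) * r - a3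
  | .D  => (r : ℤ) + 1

/-- `O_r`, the minimum of the four `Φ_ℓ(r)`. -/
def Omin (n1 n2 n3 a1 a2 a3 r : ℕ) : ℤ :=
  min (min (Phi n1 n2 n3 a1 a2 a3 r .I1) (Phi n1 n2 n3 a1 a2 a3 r .I2))
      (min (Phi n1 n2 n3 a1 a2 a3 r .I3) (Phi n1 n2 n3 a1 a2 a3 r .D))

/-- `T_r = {ℓ : Φ_ℓ(r) = O_r}`. -/
def Tie (n1 n2 n3 a1 a2 a3 r : ℕ) : Finset AbelIdx :=
  Finset.univ.filter fun ℓ => Phi n1 n2 n3 a1 a2 a3 r ℓ = Omin n1 n2 n3 a1 a2 a3 r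

/-- `r` is edge-admissible if `T_r` has at least two elements. -/
def EdgeAdmissible (n1 n2 n3 a1 a2 a3 r : ℕ) : Prop :=
  2 ≤ (Tie n1 n2 n3 a1 a2 a3 r).card

/-- The edge polynomial `P_r(C)`. -/
noncomputable def edgePoly {𝕜 : Type*} [Field 𝕜] (n1 n2 n3 : ℕ)
    (A1 A2 A3 : Polynomial 𝕜) (r : ℕ) : Polynomial 𝕜 :=
  (if AbelIdx.I1 ∈ Tie n1 n2 n3 A1.natDegree A2.natDegree A3.natDegree r then
      Polynomial.C A1.leadingCoeff * Polynomial.X ^ n1 else 0) +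
  (if AbelIdx.I2 ∈ Tie n1 n2 n3 A1.natDegree A2.natDegree A3.natDegree r then
      Polynomial.C A2.leadingCoeff * Polynomial.X ^ n2 else 0) +
  (if AbelIdx.I3 ∈ Tie n1 n2 n3 A1.natDegree A2.natDegree A3.natDegree r then
      Polynomial.C A3.leadingCoeff * Polynomial.X ^ n3 else 0) +
  (if AbelIdx.D ∈ Tie n1 n2 n3 A1.natDegree A2.natDegree A3.natDegree r then
      (r : Polynomial 𝕜) * Polynomial.X else 0)

/-- The set `Γ` of candidate denominator degrees. -/
def Gamma (n1 n2 n3 a1 a2 a3 : ℕ) : Set ℕ :=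
  {r | 0 < r ∧ ((n3 : ℤ) - n2) * r ≤ (a3 : ℤ) ∧
    (((n3 : ℤ) - n2) * r = (a3 : ℤ) - a2 ∨
     ((n3 : ℤ) - n1) * r = (a3 : ℤ) - a1 ∨
     ((n2 : ℤ) - n1) * r = (a2 : ℤ) - a1 ∨
     ((n3 : ℤ) - 1) * r = (a3 : ℤ) + 1 ∨
     ((n2 : ℤ) - 1) * r = (a2 : ℤ) + 1 ∨
     ((n1 : ℤ) - 1) * r = (a1 : ℤ) + 1)}

/-- The nondegeneracy hypothesis (ND). -/
def ND {𝕜 : Type*} [Field 𝕜] (n1 n2 n3 : ℕ) (A1 A2 A3 : Polynomial 𝕜) : Prop :=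
  ∀ r : ℕ, r ∈ Gamma n1 n2 n3 A1.natDegree A2.natDegree A3.natDegree →
    EdgeAdmissible n1 n2 n3 A1.natDegree A2.natDegree A3.natDegree r →
    ((∀ c : 𝕜, c ≠ 0 → (edgePoly n1 n2 n3 A1 A2 A3 r).IsRoot c →
        (Polynomial.derivative (edgePoly n1 n2 n3 A1 A2 A3 r)).eval c ≠ 0) ∧
     (AbelIdx.D ∈ Tie n1 n2 n3 A1.natDegree A2.natDegree A3.natDegree r →
        ∀ c : 𝕜, c ≠ 0 → (edgePoly n1 n2 n3 A1 A2 A3 r).IsRoot c →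
          ∀ m : ℕ, 1 ≤ m →
            (Polynomial.derivative (edgePoly n1 n2 n3 A1 A2 A3 r)).eval c + (m : 𝕜) ≠ 0) ∧
     (¬ ∃ c1 c2 ζ : 𝕜, c1 ≠ 0 ∧ c2 ≠ 0 ∧
        (edgePoly n1 n2 n3 A1 A2 A3 r).IsRoot c1 ∧
        (edgePoly n1 n2 n3 A1 A2 A3 r).IsRoot c2 ∧
        ζ ≠ 1 ∧ c1 = ζ * c2 ∧
        (ζ ^ (n3 - n2) = 1 ∨ ζ ^ (n3 - n1) = 1 ∨ ζ ^ (n3 - 1) = 1)))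

/-- The power-series form `E_r(y)` of the generalized Abel equation at infinity. -/
noncomputable def abelPS {𝕜 : Type*} [Field 𝕜] (n1 n2 n3 : ℕ)
    (A1 A2 A3 : Polynomial 𝕜) (r : ℕ) (y : PowerSeries 𝕜) : PowerSeries 𝕜 :=
  PowerSeries.X ^ (((r : ℤ) + 1 - Omin n1 n2 n3 A1.natDegree A2.natDegree A3.natDegree r).toNat) *
      ((r : PowerSeries 𝕜) * y + PowerSeries.X * PowerSeries.derivativeFun y) +
  PowerSeries.X ^ ((Phi n1 n2 n3 A1.natDegree A2.natDegree A3.natDegree r AbelIdx.I1 -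
      Omin n1 n2 n3 A1.natDegree A2.natDegree A3.natDegree r).toNat) *
      (A1.reverse : PowerSeries 𝕜) * y ^ n1 +
  PowerSeries.X ^ ((Phi n1 n2 n3 A1.natDegree A2.natDegree A3.natDegree r AbelIdx.I2 -
      Omin n1 n2 n3 A1.natDegree A2.natDegree A3.natDegree r).toNat) *
      (A2.reverse : PowerSeries 𝕜) * y ^ n2 +
  PowerSeries.X ^ ((Phi n1 n2 n3 A1.natDegree A2.natDegree A3.natDegree r AbelIdx.I3 -
      Omin n1 n2 n3 A1.natDegree A2.natDegree A3.natDegree r).toNat) *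
      (A3.reverse : PowerSeries 𝕜) * y ^ n3

/-- Proposition 5.3. Two distinct solution denominators `p1, p2`
(not related by a root-of-unity scaling of order dividing `n3−n2`) satisfy
`p1^{n3−n2} − p2^{n3−n2} ≠ 0` and the two displayed identities, which determine
`A2` and `A3` from `p1, p2, A1`. -/
theorem stmt8 {𝕜 : Type*} [RCLike 𝕜] (n1 n2 n3 : ℕ)
    (hn1 : 1 < n1) (hn12 : n1 < n2) (hn23 : n2 < n3)
    (A1 A2 A3 : Polynomial 𝕜) (hA1 : A1 ≠ 0) (hA2 : A2 ≠ 0) (hA3 : A3 ≠ 0)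
    (p1 p2 : Polynomial 𝕜)
    (h1 : IsSolDen n1 n2 n3 A1 A2 A3 p1) (h2 : IsSolDen n1 n2 n3 A1 A2 A3 p2)
    (hne : p1 ≠ p2)
    (hzeta : ¬ ∃ ζ : 𝕜, ζ ^ (n3 - n2) = 1 ∧ p2 = Polynomial.C ζ * p1) :
    p1 ^ (n3 - n2) - p2 ^ (n3 - n2) ≠ 0 ∧
    ((n3 : Polynomial 𝕜) - 1) * A2 * (p1 ^ (n3 - n2) - p2 ^ (n3 - n2)) =
      -(Polynomial.derivative (p1 ^ (n3 - 1) - p2 ^ (n3 - 1)) +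
        ((n3 : Polynomial 𝕜) - 1) * A1 * (p1 ^ (n3 - n1) - p2 ^ (n3 - n1))) ∧
    ((n2 : Polynomial 𝕜) - 1) * A3 * (p1 ^ (n3 - n2) - p2 ^ (n3 - n2)) =
      p1 ^ (n3 - n2) * p2 ^ (n3 - n2) *
          Polynomial.derivative (p1 ^ (n2 - 1) - p2 ^ (n2 - 1)) +
        ((n2 : Polynomial 𝕜) - 1) * A1 * p1 ^ (n3 - n2) * p2 ^ (n3 - n2) *
          (p1 ^ (n2 - n1) - p2 ^ (n2 - n1)) := by
  obtain ⟨hp1, e1⟩ := h1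
  obtain ⟨hp2, e2⟩ := h2
  have hk : n3 - n2 ≠ 0 := by omega
  have hmain : p1 ^ (n3 - n2) - p2 ^ (n3 - n2) ≠ 0 := by
    intro h
    have hpow : p1 ^ (n3 - n2) = p2 ^ (n3 - n2) := by
      rwa [sub_eq_zero] at h
    have hd1 : p1 ∣ p2 := (IsIntegrallyClosed.pow_dvd_pow_iff hk).mp hpow.dvd
    have hd2 : p2 ∣ p1 := (IsIntegrallyClosed.pow_dvd_pow_iff hk).mp hpow.symm.dvd
    obtain ⟨u, hu⟩ := associated_of_dvd_dvd hd1 hd2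
    obtain ⟨ζ, hζu, hζ⟩ := Polynomial.isUnit_iff.mp u.isUnit
    have hp2eq : p2 = C ζ * p1 := by rw [← hu, ← hζ]; ring
    have hζpow : ζ ^ (n3 - n2) = 1 := by
      have key : (1 : Polynomial 𝕜) * p1 ^ (n3 - n2) = C (ζ ^ (n3 - n2)) * p1 ^ (n3 - n2) := by
        conv_lhs => rw [one_mul, hpow, hp2eq]
        rw [mul_pow, C_pow]
      have := (mul_right_cancel₀ (pow_ne_zero _ hp1) key).symm
      exact Polynomial.C_inj.mp (by rwa [Polynomial.C_1])
    exact hzeta ⟨ζ, hζpow, hp2eq⟩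
  refine ⟨hmain, ?_, ?_⟩ <;>
  · obtain ⟨s, rfl⟩ : ∃ s, n1 = s + 2 := ⟨n1 - 2, by omega⟩
    obtain ⟨l, rfl⟩ : ∃ l, n2 = s + l + 3 := ⟨n2 - s - 3, by omega⟩
    obtain ⟨m, rfl⟩ : ∃ m, n3 = s + l + m + 4 := ⟨n3 - s - l - 4, by omega⟩
    simp only [show s + l + m + 4 - (s + l + 3) = m + 1 from by omega,
      show s + l + m + 4 - (s + 2) = l + m + 2 from by omega,
      show s + l + m + 4 - 2 = s + l + m + 2 from by omega,
      show s + l + m + 4 - 1 = s + l + m + 3 from by omega,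
      show s + l + 3 - 1 = s + l + 2 from by omega,
      show s + l + 3 - (s + 2) = l + 1 from by omega] at e1 e2 ⊢
    simp only [derivative_sub, derivative_pow, Nat.add_sub_cancel,
      Polynomial.C_eq_natCast]
    push_cast
    first
    | linear_combination ((s : Polynomial 𝕜) + l + m + 3) * e1 -
        ((s : Polynomial 𝕜) + l + m + 3) * e2
    | linear_combination ((s : Polynomial 𝕜) + l + 2) * p1 ^ (m + 1) * e2 -
        ((s : Polynomial 𝕜) + l + 2) * p2 ^ (m + 1) * e1
end

section
/- Assume (ND). Let p1 and p2 be two distinct solution denominators with 1 ≤ deg p2 ≤ deg p1 =: d. Then deg A2 ≤ max{(n2−1)·d − 1, a1 + (n2−n1)·d} and a3 ≤ (n3−n2)·deg p2 + max{(n2−1)·d − 1, a1 + (n2−n1)·d}. -/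
open Polynomial

lemma geomS_deg_le {K : Type*} [Field K] (p1 p2 : Polynomial K) {d : ℕ}
    (h1 : p1.natDegree ≤ d) (h2 : p2.natDegree ≤ d) (k : ℕ) :
    (∑ i ∈ Finset.range k, p1 ^ i * p2 ^ (k - 1 - i)).natDegree ≤ (k - 1) * d := by
  apply natDegree_sum_le_of_forall_le
  intro i hi
  simp only [Finset.mem_range] at hi
  calc (p1 ^ i * p2 ^ (k - 1 - i)).natDegree ≤ (p1 ^ i).natDegree + (p2 ^ (k-1-i)).natDegree :=
        natDegree_mul_le
    _ ≤ i * d + (k - 1 - i) * d := by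
        rw [natDegree_pow, natDegree_pow]
        exact Nat.add_le_add (Nat.mul_le_mul_left _ h1) (Nat.mul_le_mul_left _ h2)
    _ ≤ (k - 1) * d := by
        rw [← Nat.add_mul]
        exact Nat.mul_le_mul_right _ (by omega)

lemma geomS_coeff {K : Type*} [Field K] {p1 p2 : Polynomial K} {d : ℕ} {c : K}
    (hp1 : p1 ≠ 0) (hp2 : p2 ≠ 0)
    (h1 : p1.natDegree = d) (h2 : p2.natDegree = d)
    (hc1 : p1.leadingCoeff = c) (hc2 : p2.leadingCoeff = c) (k : ℕ) :
    (∑ i ∈ Finset.range k, p1 ^ i * p2 ^ (k - 1 - i)).coeff ((k - 1) * d)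
      = (k : K) * c ^ (k - 1) := by
  rcases Nat.eq_zero_or_pos k with hk | hk
  · subst hk; simp
  rw [finset_sum_coeff]
  have key : ∀ i ∈ Finset.range k,
      (p1 ^ i * p2 ^ (k - 1 - i)).coeff ((k - 1) * d) = c ^ (k - 1) := by
    intro i hi
    simp only [Finset.mem_range] at hi
    have hnd : (p1 ^ i * p2 ^ (k - 1 - i)).natDegree = (k - 1) * d := by
      rw [natDegree_mul (pow_ne_zero _ hp1) (pow_ne_zero _ hp2),
        natDegree_pow, natDegree_pow, h1, h2, ← Nat.add_mul]
      congr 1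
      omega
    rw [← hnd, coeff_natDegree, leadingCoeff_mul, leadingCoeff_pow, leadingCoeff_pow,
      hc1, hc2, ← pow_add]
    congr 1
    omega
  rw [Finset.sum_congr rfl key, Finset.sum_const, Finset.card_range, nsmul_eq_mul]

lemma geomS_props {K : Type*} [Field K] [CharZero K] {p1 p2 : Polynomial K} {d : ℕ} {c : K}
    (hp1 : p1 ≠ 0) (hp2 : p2 ≠ 0)
    (h1 : p1.natDegree = d) (h2 : p2.natDegree = d)
    (hc1 : p1.leadingCoeff = c) (hc2 : p2.leadingCoeff = c) {k : ℕ} (hk : 1 ≤ k) :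
    (∑ i ∈ Finset.range k, p1 ^ i * p2 ^ (k - 1 - i)) ≠ 0 ∧
    (∑ i ∈ Finset.range k, p1 ^ i * p2 ^ (k - 1 - i)).natDegree = (k - 1) * d ∧
    (∑ i ∈ Finset.range k, p1 ^ i * p2 ^ (k - 1 - i)).leadingCoeff = (k : K) * c ^ (k - 1) := by
  have hc : c ≠ 0 := by rw [← hc1]; exact leadingCoeff_ne_zero.mpr hp1
  have hco := geomS_coeff hp1 hp2 h1 h2 hc1 hc2 k
  have hne : (k : K) * c ^ (k - 1) ≠ 0 :=
    mul_ne_zero (Nat.cast_ne_zero.mpr (by omega)) (pow_ne_zero _ hc)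
  have hS : (∑ i ∈ Finset.range k, p1 ^ i * p2 ^ (k - 1 - i)) ≠ 0 := by
    intro h; rw [h] at hco; exact hne (by simpa using hco.symm)
  have hdeg : (∑ i ∈ Finset.range k, p1 ^ i * p2 ^ (k - 1 - i)).natDegree = (k - 1) * d :=
    le_antisymm (geomS_deg_le p1 p2 h1.le h2.le k)
      (le_natDegree_of_ne_zero (by rw [hco]; exact hne))
  exact ⟨hS, hdeg, by rw [← coeff_natDegree, hdeg, hco]⟩


lemma solden_sharp {𝕜 : Type*} [Field 𝕜] {n1 n2 n3 : ℕ}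
    (hn1 : 1 < n1) (hn12 : n1 < n2) (hn23 : n2 < n3)
    {A1 A2 A3 p : Polynomial 𝕜} (hA2 : A2 ≠ 0)
    (hp : IsSolDen n1 n2 n3 A1 A2 A3 p) (hdp : 1 ≤ p.natDegree)
    (hb2 : (n2 - 1) * p.natDegree ≤ A2.natDegree)
    (hb1 : A1.natDegree + (n2 - n1) * p.natDegree < A2.natDegree) :
    A3.natDegree = A2.natDegree + (n3 - n2) * p.natDegree ∧
      A3.leadingCoeff + A2.leadingCoeff * p.leadingCoeff ^ (n3 - n2) = 0 := by
  obtain ⟨hpne, heq⟩ := hp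
  set d := p.natDegree with hd
  set N := A2.natDegree + (n3 - n2) * d with hN
  have hB : (A2 * p ^ (n3 - n2)).natDegree = N := by
    rw [natDegree_mul hA2 (pow_ne_zero _ hpne), natDegree_pow]
  -- the remainder E
  set E := p ^ (n3 - 2) * derivative p + A1 * p ^ (n3 - n1) with hE
  have hEd : E.natDegree < N := by
    have hDD : (p ^ (n3 - 2) * derivative p).natDegree ≤ (n3 - 2) * d + (d - 1) :=
      natDegree_mul_le.trans (by
        rw [natDegree_pow]
        exact Nat.add_le_add_left (natDegree_derivative_le p) _)
    have h1 : (A1 * p ^ (n3 - n1)).natDegree ≤ A1.natDegree + (n3 - n1) * d :=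
      natDegree_mul_le.trans (by rw [natDegree_pow])
    apply lt_of_le_of_lt (natDegree_add_le _ _)
    apply max_lt
    · apply lt_of_le_of_lt hDD
      rw [hN]
      zify [show 2 ≤ n3 by omega, hdp, hn23.le, show 1 ≤ n2 by omega]
      zify [show 1 ≤ n2 by omega] at hb2
      linarith [hb2]
    · apply lt_of_le_of_lt h1
      rw [hN]
      zify [hn23.le, show n1 ≤ n3 by omega]
      zify [hn12.le] at hb1
      linarith [hb1]
  have heq' : A3 = -(A2 * p ^ (n3 - n2) + E) := by
    rw [hE]; linear_combination heq
  have hEd' : E.natDegree < (A2 * p ^ (n3 - n2)).natDegree := hB ▸ hEd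
  have hdeg : A3.natDegree = N := by
    rw [heq', natDegree_neg, natDegree_add_eq_left_of_natDegree_lt hEd', hB]
  refine ⟨hdeg, ?_⟩
  have hc : A3.coeff N = -(A2 * p ^ (n3 - n2)).leadingCoeff := by
    rw [heq', coeff_neg, coeff_add, ← hB, coeff_natDegree,
      coeff_eq_zero_of_natDegree_lt hEd', add_zero]
  rw [← hdeg, coeff_natDegree] at hc
  rw [hc, leadingCoeff_mul, leadingCoeff_pow]
  ring

lemma solden_unique {𝕜 : Type*} [Field 𝕜] [CharZero 𝕜] {n1 n2 n3 : ℕ}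
    (hn1 : 1 < n1) (hn12 : n1 < n2) (hn23 : n2 < n3)
    {A1 A2 A3 p1 p2 : Polynomial 𝕜} (hA2 : A2 ≠ 0)
    (h1 : IsSolDen n1 n2 n3 A1 A2 A3 p1) (h2 : IsSolDen n1 n2 n3 A1 A2 A3 p2)
    (hdd : p1.natDegree = p2.natDegree) (hd1 : 1 ≤ p1.natDegree)
    (hcc : p1.leadingCoeff = p2.leadingCoeff)
    (hb2 : (n2 - 1) * p1.natDegree ≤ A2.natDegree)
    (hb1 : A1.natDegree + (n2 - n1) * p1.natDegree < A2.natDegree) :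
    p1 = p2 := by
  by_contra hne
  obtain ⟨hp1, he1⟩ := h1
  obtain ⟨hp2, he2⟩ := h2
  set d := p1.natDegree with hd
  set c := p1.leadingCoeff with hc
  have hcne : c ≠ 0 := leadingCoeff_ne_zero.mpr hp1
  set q := p1 - p2 with hq
  have hqne : q ≠ 0 := sub_ne_zero.mpr hne
  set e := q.natDegree with he
  -- geometric sums
  set S2 := ∑ i ∈ Finset.range (n3 - n2), p1 ^ i * p2 ^ (n3 - n2 - 1 - i) with hS2
  set S1 := ∑ i ∈ Finset.range (n3 - n1), p1 ^ i * p2 ^ (n3 - n1 - 1 - i) with hS1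
  set SD := ∑ i ∈ Finset.range (n3 - 2), p1 ^ i * p2 ^ (n3 - 2 - 1 - i) with hSD
  have hg2 : S2 * q = p1 ^ (n3 - n2) - p2 ^ (n3 - n2) := geom_sum₂_mul p1 p2 (n3 - n2)
  have hg1 : S1 * q = p1 ^ (n3 - n1) - p2 ^ (n3 - n1) := geom_sum₂_mul p1 p2 (n3 - n1)
  have hgD : SD * q = p1 ^ (n3 - 2) - p2 ^ (n3 - 2) := geom_sum₂_mul p1 p2 (n3 - 2)
  have hdq : derivative q = derivative p1 - derivative p2 := derivative_sub
  -- the subtracted equation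
  have key : p1 ^ (n3 - 2) * derivative q + SD * q * derivative p2
      + A1 * (S1 * q) + A2 * (S2 * q) = 0 := by
    linear_combination he1 - he2 + A2 * hg2 + A1 * hg1 + derivative p2 * hgD
      + p1 ^ (n3 - 2) * hdq
  obtain ⟨hS2ne, hS2deg, hS2lc⟩ :=
    geomS_props hp1 hp2 hd.symm hdd.symm hc.symm hcc.symm (k := n3 - n2) (by omega)
  -- degree of main term
  set N := A2.natDegree + ((n3 - n2 - 1) * d + e) with hN
  have hT2deg : (A2 * (S2 * q)).natDegree = N := by
    rw [natDegree_mul hA2 (mul_ne_zero hS2ne hqne), natDegree_mul hS2ne hqne, hS2deg]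
  have hT2ne : A2 * (S2 * q) ≠ 0 := mul_ne_zero hA2 (mul_ne_zero hS2ne hqne)
  have hNpos : 0 < N := by
    have : 0 < (n2 - 1) * d := Nat.mul_pos (by omega) (by omega)
    calc 0 < (n2 - 1) * d := this
      _ ≤ A2.natDegree := hb2
      _ ≤ N := Nat.le_add_right _ _
  -- bounds on the remainder terms
  have bD1 : (p1 ^ (n3 - 2) * derivative q).natDegree < N := by
    by_cases hq' : derivative q = 0
    · rw [hq', mul_zero, natDegree_zero]; exact hNpos
    · have he1' : 1 ≤ e := by
        rcases Nat.eq_zero_or_pos e with h0 | h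
        · obtain ⟨a, ha⟩ := natDegree_eq_zero.mp (show q.natDegree = 0 by rw [← he]; exact h0)
          rw [← ha, derivative_C] at hq'
          exact absurd rfl hq'
        · exact h
      have hb : (p1 ^ (n3 - 2) * derivative q).natDegree ≤ (n3 - 2) * d + (e - 1) :=
        natDegree_mul_le.trans (by
          rw [natDegree_pow]
          exact Nat.add_le_add_left (natDegree_derivative_le q) _)
      apply lt_of_le_of_lt hb
      rw [hN]
      zify [show 2 ≤ n3 by omega, he1', hn23.le, show 1 ≤ n3 - n2 by omega,
        show 1 ≤ n2 by omega]
      zify [show 1 ≤ n2 by omega] at hb2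
      linarith [hb2]
  have bD2 : (SD * q * derivative p2).natDegree < N := by
    have hb : (SD * q * derivative p2).natDegree ≤ ((n3 - 2 - 1) * d + e) + (d - 1) := by
      apply natDegree_mul_le.trans
      apply Nat.add_le_add
      · exact natDegree_mul_le.trans (Nat.add_le_add_right
          (geomS_deg_le p1 p2 hd.symm.le (hdd ▸ le_refl d) (n3 - 2)) _)
      · rw [hdd]
        exact natDegree_derivative_le p2
    apply lt_of_le_of_lt hb
    rw [hN]
    zify [show 2 ≤ n3 by omega, show 1 ≤ n3 - 2 by omega, hd1, hn23.le,
      show 1 ≤ n3 - n2 by omega, show 1 ≤ n2 by omega]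
    zify [show 1 ≤ n2 by omega] at hb2
    linarith [hb2]
  have bD3 : (A1 * (S1 * q)).natDegree < N := by
    have hb : (A1 * (S1 * q)).natDegree ≤ A1.natDegree + ((n3 - n1 - 1) * d + e) := by
      apply natDegree_mul_le.trans
      apply Nat.add_le_add_left
      exact natDegree_mul_le.trans (Nat.add_le_add_right
        (geomS_deg_le p1 p2 hd.symm.le (hdd ▸ le_refl d) (n3 - n1)) _)
    apply lt_of_le_of_lt hb
    rw [hN]
    zify [show n1 ≤ n3 by omega, show 1 ≤ n3 - n1 by omega, hn23.le,
      show 1 ≤ n3 - n2 by omega]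
    zify [hn12.le] at hb1
    linarith [hb1]
  -- contradiction
  have hRdeg : (p1 ^ (n3 - 2) * derivative q + SD * q * derivative p2
      + A1 * (S1 * q)).natDegree < N := by
    apply lt_of_le_of_lt (natDegree_add_le _ _)
    apply max_lt _ bD3
    exact lt_of_le_of_lt (natDegree_add_le _ _) (max_lt bD1 bD2)
  have hT2eq : A2 * (S2 * q) = -(p1 ^ (n3 - 2) * derivative q + SD * q * derivative p2
      + A1 * (S1 * q)) := by linear_combination key
  rw [← hT2deg] at hRdeg
  rw [hT2eq, natDegree_neg] at hRdeg
  exact lt_irrefl _ hRdeg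


lemma solden_deg_bound {𝕜 : Type*} [Field 𝕜] (n1 n2 n3 : ℕ) (A1 A2 A3 p : Polynomial 𝕜)
    (hp : IsSolDen n1 n2 n3 A1 A2 A3 p) :
    A3.natDegree ≤ max (max ((n3 - 2) * p.natDegree + (p.natDegree - 1))
      (A2.natDegree + (n3 - n2) * p.natDegree)) (A1.natDegree + (n3 - n1) * p.natDegree) := by
  have heq' : A3 = -(p ^ (n3 - 2) * Polynomial.derivative p + A2 * p ^ (n3 - n2)
      + A1 * p ^ (n3 - n1)) := by linear_combination hp.2
  rw [heq', natDegree_neg]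
  refine (natDegree_add_le _ _).trans (max_le_max ((natDegree_add_le _ _).trans
    (max_le_max ?_ ?_)) ?_)
  · exact natDegree_mul_le.trans (by
      rw [natDegree_pow]; exact Nat.add_le_add_left (natDegree_derivative_le p) _)
  · exact natDegree_mul_le.trans (by rw [natDegree_pow])
  · exact natDegree_mul_le.trans (by rw [natDegree_pow])

/-- Corollary 5.4. Under (ND), if `p1, p2` are distinct solution
denominators with `1 ≤ deg p2 ≤ deg p1 = d`, then
`deg A2 ≤ max{(n2−1)d − 1, a1 + (n2−n1)d}` and
`a3 ≤ (n3−n2)·deg p2 + max{(n2−1)d − 1, a1 + (n2−n1)d}`. -/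
theorem stmt9 {𝕜 : Type*} [RCLike 𝕜] (n1 n2 n3 : ℕ)
    (hn1 : 1 < n1) (hn12 : n1 < n2) (hn23 : n2 < n3)
    (A1 A2 A3 : Polynomial 𝕜) (hA1 : A1 ≠ 0) (hA2 : A2 ≠ 0) (hA3 : A3 ≠ 0)
    (hND : ND n1 n2 n3 A1 A2 A3)
    (p1 p2 : Polynomial 𝕜)
    (h1 : IsSolDen n1 n2 n3 A1 A2 A3 p1) (h2 : IsSolDen n1 n2 n3 A1 A2 A3 p2)
    (hne : p1 ≠ p2) (hd2 : 1 ≤ p2.natDegree) (hd21 : p2.natDegree ≤ p1.natDegree) :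
    (A2.natDegree : ℤ) ≤
      max (((n2 : ℤ) - 1) * p1.natDegree - 1)
        ((A1.natDegree : ℤ) + ((n2 : ℤ) - n1) * p1.natDegree) ∧
    (A3.natDegree : ℤ) ≤ ((n3 : ℤ) - n2) * p2.natDegree +
      max (((n2 : ℤ) - 1) * p1.natDegree - 1)
        ((A1.natDegree : ℤ) + ((n2 : ℤ) - n1) * p1.natDegree) := by
  have hA2M : (A2.natDegree : ℤ) ≤
      max (((n2 : ℤ) - 1) * p1.natDegree - 1)
        ((A1.natDegree : ℤ) + ((n2 : ℤ) - n1) * p1.natDegree) := by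
    by_contra hcon
    push_neg at hcon
    have hx2 : ((n2 : ℤ) - 1) * p1.natDegree - 1 < A2.natDegree :=
      lt_of_le_of_lt (le_max_left _ _) hcon
    have hx1 : (A1.natDegree : ℤ) + ((n2 : ℤ) - n1) * p1.natDegree < A2.natDegree :=
      lt_of_le_of_lt (le_max_right _ _) hcon
    have hx2' : ((n2 : ℤ) - 1) * p1.natDegree ≤ A2.natDegree := by
      have := Int.lt_iff_add_one_le.mp hx2; linarith
    have hb2 : (n2 - 1) * p1.natDegree ≤ A2.natDegree := by
      zify [show 1 ≤ n2 by omega]; linarith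
    have hb1 : A1.natDegree + (n2 - n1) * p1.natDegree < A2.natDegree := by
      zify [hn12.le]; linarith
    have hb2' : (n2 - 1) * p2.natDegree ≤ A2.natDegree :=
      le_trans (Nat.mul_le_mul_left _ hd21) hb2
    have hb1' : A1.natDegree + (n2 - n1) * p2.natDegree < A2.natDegree :=
      lt_of_le_of_lt (Nat.add_le_add_left (Nat.mul_le_mul_left _ hd21) _) hb1
    obtain ⟨k, hk⟩ : ∃ k, n3 = n2 + k := ⟨n3 - n2, by omega⟩
    subst hk
    have hk1 : 1 ≤ k := by omega
    have hkk : n2 + k - n2 = k := by omega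
    obtain ⟨e1, rel1⟩ := solden_sharp hn1 hn12 hn23 hA2 h1 (hd2.trans hd21) hb2 hb1
    obtain ⟨e2, rel2⟩ := solden_sharp hn1 hn12 hn23 hA2 h2 hd2 hb2' hb1'
    rw [hkk] at rel1 rel2 e1 e2
    have hdd : p1.natDegree = p2.natDegree := by
      have h3 : k * p1.natDegree = k * p2.natDegree :=
        Nat.add_left_cancel (e1.symm.trans e2)
      exact Nat.eq_of_mul_eq_mul_left (by omega) h3
    have hc1 : p1.leadingCoeff ≠ 0 := leadingCoeff_ne_zero.mpr h1.1
    have hc2 : p2.leadingCoeff ≠ 0 := leadingCoeff_ne_zero.mpr h2.1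
    have hA2lc : A2.leadingCoeff ≠ 0 := leadingCoeff_ne_zero.mpr hA2
    have hck : p1.leadingCoeff ^ k = p2.leadingCoeff ^ k := by
      apply mul_left_cancel₀ hA2lc
      linear_combination rel1 - rel2
    have ha3 : (A3.natDegree : ℤ) = A2.natDegree + k * p1.natDegree := by exact_mod_cast e1
    -- Tie computation at r = p1.natDegree
    have h21 : (n2 : ℤ) * p1.natDegree - A2.natDegree <
        (n1 : ℤ) * p1.natDegree - A1.natDegree := by linarith
    have h2D : (n2 : ℤ) * p1.natDegree - A2.natDegree < (p1.natDegree : ℤ) + 1 := by linarith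
    have hPhi3 : Phi n1 n2 (n2 + k) A1.natDegree A2.natDegree A3.natDegree p1.natDegree
        AbelIdx.I3 = (n2 : ℤ) * p1.natDegree - A2.natDegree := by
      simp only [Phi]; push_cast [ha3]; ring
    have hOmin : Omin n1 n2 (n2 + k) A1.natDegree A2.natDegree A3.natDegree p1.natDegree
        = (n2 : ℤ) * p1.natDegree - A2.natDegree := by
      rw [Omin, hPhi3]
      simp only [Phi]
      rw [min_eq_right h21.le, min_eq_left h2D.le, min_self]
    have hmem : ∀ ℓ, (ℓ ∈ Tie n1 n2 (n2 + k) A1.natDegree A2.natDegree A3.natDegree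
        p1.natDegree ↔ Phi n1 n2 (n2 + k) A1.natDegree A2.natDegree A3.natDegree
        p1.natDegree ℓ = Omin n1 n2 (n2 + k) A1.natDegree A2.natDegree A3.natDegree
        p1.natDegree) := by
      intro ℓ; simp [Tie]
    have mI2 : AbelIdx.I2 ∈ Tie n1 n2 (n2 + k) A1.natDegree A2.natDegree A3.natDegree
        p1.natDegree := (hmem _).mpr (by rw [hOmin]; rfl)
    have mI3 : AbelIdx.I3 ∈ Tie n1 n2 (n2 + k) A1.natDegree A2.natDegree A3.natDegree
        p1.natDegree := (hmem _).mpr (by rw [hOmin, hPhi3])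
    have mI1 : AbelIdx.I1 ∉ Tie n1 n2 (n2 + k) A1.natDegree A2.natDegree A3.natDegree
        p1.natDegree := by
      intro h
      have := (hmem _).mp h
      rw [hOmin] at this
      simp only [Phi] at this
      linarith
    have mD : AbelIdx.D ∉ Tie n1 n2 (n2 + k) A1.natDegree A2.natDegree A3.natDegree
        p1.natDegree := by
      intro h
      have := (hmem _).mp h
      rw [hOmin] at this
      simp only [Phi] at this
      linarith
    have hsub : ({AbelIdx.I2, AbelIdx.I3} : Finset AbelIdx) ⊆
        Tie n1 n2 (n2 + k) A1.natDegree A2.natDegree A3.natDegree p1.natDegree := by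
      intro x hx
      simp only [Finset.mem_insert, Finset.mem_singleton] at hx
      rcases hx with rfl | rfl
      · exact mI2
      · exact mI3
    have hadm : EdgeAdmissible n1 n2 (n2 + k) A1.natDegree A2.natDegree A3.natDegree
        p1.natDegree := by
      refine le_trans ?_ (Finset.card_le_card hsub)
      decide
    have hGam : p1.natDegree ∈ Gamma n1 n2 (n2 + k) A1.natDegree A2.natDegree A3.natDegree := by
      refine ⟨by omega, ?_, Or.inl ?_⟩
      · push_cast
        rw [ha3]
        have : (0 : ℤ) ≤ A2.natDegree := Int.natCast_nonneg _
        nlinarith [this]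
      · push_cast
        rw [ha3]
        ring
    have hEP : edgePoly n1 n2 (n2 + k) A1 A2 A3 p1.natDegree =
        Polynomial.C A2.leadingCoeff * Polynomial.X ^ n2 +
          Polynomial.C A3.leadingCoeff * Polynomial.X ^ (n2 + k) := by
      rw [edgePoly, if_neg mI1, if_pos mI2, if_pos mI3, if_neg mD, zero_add, add_zero]
    have hroot : ∀ c : 𝕜, c ≠ 0 →
        A3.leadingCoeff + A2.leadingCoeff * c ^ k = 0 →
        (edgePoly n1 n2 (n2 + k) A1 A2 A3 p1.natDegree).IsRoot c⁻¹ := by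
      intro c hc rel
      rw [hEP]
      simp only [IsRoot, eval_add, eval_mul, eval_pow, eval_C, eval_X]
      have hrel : A3.leadingCoeff = -(A2.leadingCoeff * c ^ k) := by linear_combination rel
      rw [hrel, pow_add]
      have h5 : c ^ k * (c⁻¹) ^ k = 1 := by
        rw [← mul_pow, mul_inv_cancel₀ hc, one_pow]
      linear_combination (-(A2.leadingCoeff * (c⁻¹) ^ n2)) * h5
    have hr1 := hroot p1.leadingCoeff hc1 rel1
    have hr2 := hroot p2.leadingCoeff hc2 rel2
    obtain ⟨-, -, hND3⟩ := hND p1.natDegree hGam hadm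
    have hc12 : p1.leadingCoeff = p2.leadingCoeff := by
      by_contra hneq
      apply hND3
      refine ⟨p1.leadingCoeff⁻¹, p2.leadingCoeff⁻¹, p2.leadingCoeff * p1.leadingCoeff⁻¹,
        inv_ne_zero hc1, inv_ne_zero hc2, hr1, hr2, ?_, ?_, Or.inl ?_⟩
      · intro h
        exact hneq ((mul_inv_eq_one₀ hc1).mp h).symm
      · rw [mul_comm p2.leadingCoeff, mul_assoc, mul_inv_cancel₀ hc2, mul_one]
      · rw [hkk, mul_pow, inv_pow, hck, mul_inv_cancel₀ (pow_ne_zero _ hc2)]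
    exact hne (solden_unique hn1 hn12 hn23 hA2 h1 h2 hdd (hd2.trans hd21) hc12 hb2 hb1)
  refine ⟨hA2M, ?_⟩
  have hbound := solden_deg_bound n1 n2 n3 A1 A2 A3 p2 h2
  set M : ℤ := max (((n2 : ℤ) - 1) * p1.natDegree - 1)
      ((A1.natDegree : ℤ) + ((n2 : ℤ) - n1) * p1.natDegree) with hM
  have hM2 : ((n2 : ℤ) - 1) * p1.natDegree - 1 ≤ M := le_max_left _ _
  have hM1 : (A1.natDegree : ℤ) + ((n2 : ℤ) - n1) * p1.natDegree ≤ M := le_max_right _ _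
  have hmono2 : ((n2 : ℤ) - 1) * (p2.natDegree : ℤ) ≤ ((n2 : ℤ) - 1) * p1.natDegree := by
    apply mul_le_mul_of_nonneg_left (by exact_mod_cast hd21)
    have : (1 : ℤ) ≤ n2 := by exact_mod_cast (by omega : 1 ≤ n2)
    linarith
  have hmono1 : ((n2 : ℤ) - n1) * (p2.natDegree : ℤ) ≤ ((n2 : ℤ) - n1) * p1.natDegree := by
    apply mul_le_mul_of_nonneg_left (by exact_mod_cast hd21)
    have : (n1 : ℤ) ≤ n2 := by exact_mod_cast hn12.le
    linarith
  rcases le_max_iff.mp hbound with h | h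
  · rcases le_max_iff.mp h with h' | h'
    · have hz : (A3.natDegree : ℤ) ≤ ((n3 : ℤ) - 2) * p2.natDegree + ((p2.natDegree : ℤ) - 1) := by
        zify [show 2 ≤ n3 by omega, hd2] at h'
        linarith
      push_cast
      linarith
    · have hz : (A3.natDegree : ℤ) ≤ (A2.natDegree : ℤ) + ((n3 : ℤ) - n2) * p2.natDegree := by
        zify [hn23.le] at h'
        linarith
      linarith
  · have hz : (A3.natDegree : ℤ) ≤ (A1.natDegree : ℤ) + ((n3 : ℤ) - n1) * p2.natDegree := by
      zify [show n1 ≤ n3 by omega] at h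
      linarith
    linarith
end
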